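/- arXiv:2303.05310 — 2 statements merged into one kernel-verified Lean document; each statement's English description precedes it below -/
import Mathlib

section
/- Let {a_j}_{j≥1}, {b_j}_{j≥0}, {d_j}_{j≥0} be sequences of nonnegative real numbers, let M > 0, L > 2, and let j₀ ≥ 1 be a fixed index. Assume a_{j₀} ≤ M, b_{j₀} ≤ M, d_{j₀} ≤ M, and that for all j ≥ j₀+1: (i) b_j ≤ b_{j−1}; (ii) a_j + b_j ≤ L·a_{j−1}; (iii) d_j ≤ M·2^{−j}; and (iv) if a_j ≥ (1/2)·a_{j−1} and a_j ≥ max{2^{−j}, d_{j−1}}, then b_j ≤ L·(b_{j−1} − b_j). Then there exist constants θ = θ(L) ∈ (1/2, 1), depending only on L, and C₀ = C₀(L, j₀), depending only on L and j₀, such that b_{j+1} ≤ C₀·(M+1)·(θ^j + j·θ^j) for all j ≥ j₀+1. -/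
set_option maxHeartbeats 1000000

/-- The iteration lemma for three sequences of nonnegative numbers. -/
theorem statement6 (L : ℝ) (hL : 2 < L) :
    ∃ θ : ℝ, θ ∈ Set.Ioo (1 / 2 : ℝ) 1 ∧
    ∀ j₀ : ℕ, 1 ≤ j₀ → ∃ C₀ : ℝ, 0 < C₀ ∧
    ∀ M : ℝ, 0 < M →
    ∀ a b d : ℕ → ℝ,
      (∀ j, 0 ≤ a j) → (∀ j, 0 ≤ b j) → (∀ j, 0 ≤ d j) →
      a j₀ ≤ M → b j₀ ≤ M → d j₀ ≤ M →
      (∀ j, j₀ + 1 ≤ j → b j ≤ b (j - 1)) →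
      (∀ j, j₀ + 1 ≤ j → a j + b j ≤ L * a (j - 1)) →
      (∀ j, j₀ + 1 ≤ j → d j ≤ M * (1 / 2 : ℝ) ^ j) →
      (∀ j, j₀ + 1 ≤ j →
        (1 / 2 * a (j - 1) ≤ a j ∧ max ((1 / 2 : ℝ) ^ j) (d (j - 1)) ≤ a j) →
        b j ≤ L * (b (j - 1) - b j)) →
      ∀ j, j₀ + 1 ≤ j → b (j + 1) ≤ C₀ * (M + 1) * (θ ^ j + (j : ℝ) * θ ^ j) := by
  have hL0 : (0:ℝ) < L := by linarith
  have hL1 : (0:ℝ) < L + 1 := by linarith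
  obtain ⟨N, hN⟩ := exists_pow_lt_of_lt_one
    (show (0:ℝ) < 1 / (2 * L) by positivity)
    (show L / (L + 1) < 1 from (div_lt_one hL1).2 (by linarith))
  have hN1 : 1 ≤ N := by
    rcases Nat.eq_zero_or_pos N with h0 | h
    · exfalso
      rw [h0, pow_zero] at hN
      have h2 : (1:ℝ) / (2 * L) < 1 := by
        rw [div_lt_one (by linarith)]; linarith
      linarith
    · exact h
  have hkey : L * (L / (L + 1)) ^ N ≤ 1 / 2 := by
    have h2 : (L / (L + 1)) ^ N ≤ 1 / (2 * L) := hN.le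
    calc L * (L/(L+1))^N ≤ L * (1/(2*L)) := mul_le_mul_of_nonneg_left h2 hL0.le
      _ = 1/2 := by field_simp
  set θ : ℝ := (1/2 : ℝ) ^ (((N:ℝ) + 1)⁻¹) with hθdef
  have hNc : (1:ℝ) ≤ (N:ℝ) := by exact_mod_cast hN1
  have hinvpos : 0 < ((N:ℝ)+1)⁻¹ := by positivity
  have hinvlt : ((N:ℝ)+1)⁻¹ < 1 := by
    rw [inv_lt_one_iff₀]; right; linarith
  have hθgt : 1/2 < θ := by
    have h := Real.rpow_lt_rpow_of_exponent_gt (x := (1/2:ℝ)) (by norm_num) (by norm_num) hinvlt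
    rwa [Real.rpow_one] at h
  have hθlt : θ < 1 := Real.rpow_lt_one (by norm_num) (by norm_num) hinvpos
  have hθpos : 0 < θ := lt_trans (by norm_num) hθgt
  have hθkey : θ ^ (N+1) = 1/2 := by
    rw [hθdef, ← Real.rpow_natCast ((1/2:ℝ) ^ (((N:ℝ)+1)⁻¹)) (N+1),
        ← Real.rpow_mul (by norm_num : (0:ℝ) ≤ 1/2)]
    have he : ((N:ℝ)+1)⁻¹ * ((N+1 : ℕ) : ℝ) = 1 := by
      push_cast
      field_simp
    rw [he, Real.rpow_one]
  refine ⟨θ, ⟨hθgt, hθlt⟩, ?_⟩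
  intro j₀ hj₀
  refine ⟨L * 2^(j₀+1) + 1, by positivity, ?_⟩
  intro M hM a b d ha hb hd haj₀ hbj₀ hdj₀ hmono hiter hdbd hdich
  have hbM : ∀ j, j₀ ≤ j → b j ≤ M := by
    intro j hj
    induction j, hj using Nat.le_induction with
    | base => exact hbj₀
    | succ n hn ih =>
      have h := hmono (n+1) (by omega)
      simp only [Nat.add_sub_cancel] at h
      linarith
  have hdM : ∀ j, j₀ ≤ j → d j ≤ M * 2^j₀ * (1/2:ℝ)^j := by
    intro j hj
    rcases eq_or_lt_of_le hj with rfl | h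
    · have h1 : (2:ℝ)^j₀ * (1/2:ℝ)^j₀ = 1 := by
        rw [← mul_pow]; norm_num
      have h2 : M * 2^j₀ * (1/2:ℝ)^j₀ = M := by
        rw [mul_assoc, h1, mul_one]
      linarith
    · have h2 := hdbd j (by omega)
      have h3 : (1:ℝ) ≤ 2^j₀ := one_le_pow₀ (by norm_num)
      have h5 : M ≤ M * 2^j₀ := by nlinarith
      have h4 : M * (1/2:ℝ)^j ≤ M * 2^j₀ * (1/2:ℝ)^j :=
        mul_le_mul_of_nonneg_right h5 (pow_nonneg (by norm_num) j)
      linarith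
  have hΦ : ∀ j, j₀ ≤ j → a j * b j ^ N ≤ (M+1)^(N+1) * 2^(j₀+1) * (1/2:ℝ)^j := by
    intro j hj
    induction j, hj using Nat.le_induction with
    | base =>
      have h1 : a j₀ * b j₀ ^ N ≤ M * M ^ N :=
        mul_le_mul haj₀ (pow_le_pow_left₀ (hb _) hbj₀ N) (pow_nonneg (hb _) N) hM.le
      have h2 : M * M ^ N ≤ (M+1)^(N+1) := by
        calc M * M^N = M^(N+1) := by ring
          _ ≤ (M+1)^(N+1) := pow_le_pow_left₀ hM.le (by linarith) _
      have h3 : (2:ℝ)^(j₀+1) * (1/2:ℝ)^j₀ = 2 := by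
        have h4 : (2:ℝ)^j₀ * (1/2:ℝ)^j₀ = 1 := by rw [← mul_pow]; norm_num
        rw [pow_succ]; nlinarith
      nlinarith [pow_nonneg (show (0:ℝ) ≤ M+1 by linarith) (N+1)]
    | succ n hn ih =>
      by_cases hc : 1/2 * a ((n+1) - 1) ≤ a (n+1) ∧ max ((1/2:ℝ)^(n+1)) (d ((n+1) - 1)) ≤ a (n+1)
      · have hb' := hdich (n+1) (by omega) hc
        simp only [Nat.add_sub_cancel] at hb'
        have hbc : b (n+1) ≤ L/(L+1) * b n := by
          rw [div_mul_eq_mul_div, le_div_iff₀ hL1]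
          nlinarith
        have hac : a (n+1) ≤ L * a n := by
          have h := hiter (n+1) (by omega)
          simp only [Nat.add_sub_cancel] at h
          linarith [hb (n+1)]
        calc a (n+1) * b (n+1)^N ≤ (L * a n) * ((L/(L+1)) * b n)^N :=
              mul_le_mul hac (pow_le_pow_left₀ (hb _) hbc N) (pow_nonneg (hb _) N)
                (mul_nonneg hL0.le (ha n))
          _ = (L * (L/(L+1))^N) * (a n * b n ^ N) := by rw [mul_pow]; ring
          _ ≤ (1/2) * (a n * b n ^ N) :=
              mul_le_mul_of_nonneg_right hkey (mul_nonneg (ha n) (pow_nonneg (hb n) N))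
          _ ≤ (1/2) * ((M+1)^(N+1) * 2^(j₀+1) * (1/2:ℝ)^n) := by linarith
          _ = (M+1)^(N+1) * 2^(j₀+1) * (1/2:ℝ)^(n+1) := by rw [pow_succ]; ring
      · by_cases hh : 1/2 * a ((n+1) - 1) ≤ a (n+1)
        · have hlt : a (n+1) < max ((1/2:ℝ)^(n+1)) (d ((n+1) - 1)) := by
            by_contra hcon
            push_neg at hcon
            exact hc ⟨hh, hcon⟩
          simp only [Nat.add_sub_cancel] at hlt
          have hmax : max ((1/2:ℝ)^(n+1)) (d n) ≤ (M+1) * 2^(j₀+1) * (1/2:ℝ)^(n+1) := by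
            apply max_le
            · have hone : (1:ℝ) ≤ (M+1) * 2^(j₀+1) := by
                have h5 : (1:ℝ) ≤ 2^(j₀+1) := one_le_pow₀ (by norm_num)
                nlinarith
              calc (1/2:ℝ)^(n+1) = 1 * (1/2:ℝ)^(n+1) := (one_mul _).symm
                _ ≤ ((M+1) * 2^(j₀+1)) * (1/2:ℝ)^(n+1) :=
                    mul_le_mul_of_nonneg_right hone (pow_nonneg (by norm_num) _)
                _ = (M+1) * 2^(j₀+1) * (1/2:ℝ)^(n+1) := by ring
            · calc d n ≤ M * 2^j₀ * (1/2:ℝ)^n := hdM n hn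
                _ = M * 2^(j₀+1) * (1/2:ℝ)^(n+1) := by rw [pow_succ, pow_succ]; ring
                _ ≤ (M+1) * 2^(j₀+1) * (1/2:ℝ)^(n+1) := by
                    apply mul_le_mul_of_nonneg_right _ (pow_nonneg (by norm_num) _)
                    nlinarith [pow_nonneg (show (0:ℝ) ≤ 2 by norm_num) (j₀+1)]
          have hbn : b (n+1) ≤ M + 1 := le_trans (hbM (n+1) (by omega)) (by linarith)
          calc a (n+1) * b (n+1)^N ≤ ((M+1) * 2^(j₀+1) * (1/2:ℝ)^(n+1)) * (M+1)^N := by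
                apply mul_le_mul (le_trans hlt.le hmax) (pow_le_pow_left₀ (hb _) hbn N)
                  (pow_nonneg (hb _) N)
                positivity
            _ = (M+1)^(N+1) * 2^(j₀+1) * (1/2:ℝ)^(n+1) := by rw [pow_succ]; ring
        · push_neg at hh
          simp only [Nat.add_sub_cancel] at hh
          have hbmono := hmono (n+1) (by omega)
          simp only [Nat.add_sub_cancel] at hbmono
          calc a (n+1) * b (n+1)^N ≤ (1/2 * a n) * b n ^ N :=
                mul_le_mul hh.le (pow_le_pow_left₀ (hb _) hbmono N) (pow_nonneg (hb _) N)
                  (mul_nonneg (by norm_num) (ha n))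
            _ = 1/2 * (a n * b n ^ N) := by ring
            _ ≤ 1/2 * ((M+1)^(N+1) * 2^(j₀+1) * (1/2:ℝ)^n) := by linarith
            _ = (M+1)^(N+1) * 2^(j₀+1) * (1/2:ℝ)^(n+1) := by rw [pow_succ]; ring
  intro j hj
  have hiter' := hiter (j+1) (by omega)
  simp only [Nat.add_sub_cancel] at hiter'
  have hbj1 : b (j+1) ≤ L * a j := by linarith [ha (j+1)]
  have hbmono := hmono (j+1) (by omega)
  simp only [Nat.add_sub_cancel] at hbmono
  have hpow : b (j+1) ^ (N+1) ≤ L * (a j * b j ^ N) := by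
    calc b (j+1)^(N+1) = b (j+1) * b (j+1)^N := by ring
      _ ≤ (L * a j) * b j ^ N :=
          mul_le_mul hbj1 (pow_le_pow_left₀ (hb _) hbmono N) (pow_nonneg (hb _) N)
            (mul_nonneg hL0.le (ha j))
      _ = L * (a j * b j ^ N) := by ring
  have hΦj := hΦ j (by omega)
  have h1 : b (j+1)^(N+1) ≤ L * ((M+1)^(N+1) * 2^(j₀+1) * (1/2:ℝ)^j) :=
    le_trans hpow (mul_le_mul_of_nonneg_left hΦj hL0.le)
  set C₀ : ℝ := L * 2^(j₀+1) + 1 with hC₀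
  have hC₀pos : (0:ℝ) < L * 2^(j₀+1) := by positivity
  have hC₀1 : (1:ℝ) ≤ C₀ := by rw [hC₀]; linarith
  have hmain : b (j+1) ≤ C₀ * (M+1) * θ^j := by
    apply le_of_pow_le_pow_left₀ (Nat.succ_ne_zero N)
      (mul_nonneg (mul_nonneg (by linarith) (by linarith)) (pow_nonneg hθpos.le j))
    calc b (j+1)^(N+1) ≤ L * ((M+1)^(N+1) * 2^(j₀+1) * (1/2:ℝ)^j) := h1
      _ = (L * 2^(j₀+1)) * ((M+1)^(N+1) * (1/2:ℝ)^j) := by ring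
      _ ≤ C₀^(N+1) * ((M+1)^(N+1) * (1/2:ℝ)^j) := by
          apply mul_le_mul_of_nonneg_right _
            (mul_nonneg (pow_nonneg (by linarith) _) (pow_nonneg (by norm_num) _))
          calc L * 2^(j₀+1) ≤ C₀ := by rw [hC₀]; linarith
            _ = C₀^1 := (pow_one _).symm
            _ ≤ C₀^(N+1) := pow_le_pow_right₀ hC₀1 (by omega)
      _ = (C₀ * (M+1) * θ^j)^(N+1) := by
          rw [mul_pow, mul_pow, ← pow_mul, mul_comm j (N+1), pow_mul, hθkey]
          ring
  have hjθ : 0 ≤ C₀ * (M+1) * ((j:ℝ) * θ^j) :=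
    mul_nonneg (mul_nonneg (by linarith) (by linarith))
      (mul_nonneg (Nat.cast_nonneg j) (pow_nonneg hθpos.le j))
  nlinarith [hmain]
end

section
/- Let n ≥ 2 and let f : ℝ → ℝ satisfy f(t) ≥ A·min{0,t} − K for all t ∈ ℝ, where A ≥ 0, K ≥ 0. Let u ∈ C²(B_r) satisfy −Δu = f(u) in B_r ⊂ ℝⁿ. Then there is a constant C(n), depending only on n, such that at every point x ∈ B_r with Du(x) ≠ 0, |D²u(x)| ≤ C(n)·(|D²u(x)|² − |w(x)|²)^{1/2} − Δu(x) + 2(A|u(x)| + K), where w(x) := D²u(x)·Du(x)/|Du(x)| (the gradient of |Du| at x) and |D²u| denotes the Frobenius norm of the Hessian. -/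
open MeasureTheory Metric Filter
open scoped RealInnerProductSpace Topology

noncomputable section

abbrev En (n : ℕ) := EuclideanSpace ℝ (Fin n)

/-- `f'₋(t) = liminf_{h→0} (f(t+h)-f(t))/h`. -/
def fminus (f : ℝ → ℝ) (t : ℝ) : ℝ :=
  Filter.liminf (fun h => (f (t + h) - f t) / h) (𝓝[≠] (0 : ℝ))

/-- The Laplacian of `u`, i.e. the trace of its Hessian. -/
def lapl {n : ℕ} (u : En n → ℝ) (x : En n) : ℝ :=
  ∑ i, fderiv ℝ (fun y => fderiv ℝ u y (EuclideanSpace.single i 1)) x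
      (EuclideanSpace.single i 1)


/-- The Frobenius norm of the Hessian of `u` at `x`. -/
def hessNorm {n : ℕ} (u : En n → ℝ) (x : En n) : ℝ :=
  Real.sqrt (∑ i, ∑ j,
    (fderiv ℝ (fun y => fderiv ℝ u y (EuclideanSpace.single j 1)) x
      (EuclideanSpace.single i 1)) ^ 2)

/-- The Hessian of `u` at `x` applied to the vector `v`, as a vector in `ℝⁿ`. -/
def hessApply {n : ℕ} (u : En n → ℝ) (x v : En n) : En n :=
  (EuclideanSpace.equiv (Fin n) ℝ).symm
    (fun i => fderiv ℝ (fun y => fderiv ℝ u y v) x (EuclideanSpace.single i 1))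

open Finset InnerProductSpace
open LinearMap (trace)
open Module (finrank)

/-! Let `H` be the Hessian of `u` at `x`, viewed as a symmetric operator, and complete
`ν = Du/|Du|` to an orthonormal basis `ν, e₂, …, eₙ`. Then
`R² := |D²u|² - |Hν|² = ∑_{k ≥ 2} |H e_k|²`. Since `⟨Hν, e_k⟩ = ⟨ν, H e_k⟩`, we get
`|Hν|² ≤ ⟨Hν, ν⟩² + R²`, hence `|D²u| ≤ |⟨Hν, ν⟩| + √2 R`; and
`|Δu - ⟨Hν, ν⟩| = |∑_{k ≥ 2} ⟨H e_k, e_k⟩| ≤ √(n - 1) R`. Finally the equation gives the one-sided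
bound `Δu ≤ A|u| + K`, which controls `|⟨Hν, ν⟩|` by `|Δu - ⟨Hν, ν⟩| - Δu + 2(A|u| + K)`. -/

lemma Real.sqrt_le_of_le_sq_add_two_mul {S R l D M c : ℝ} (hR : 0 ≤ R) (hS : S ≤ l ^ 2 + 2 * R)
    (hD : |D - l| ≤ c * √R) (hDM : D ≤ M) (hM : 0 ≤ M) :
    √S ≤ (√2 + c) * √R - D + 2 * M := by
  have hS' : √S ≤ |l| + √2 * √R := by
    rw [Real.sqrt_le_left (by positivity)]
    nlinarith [sq_abs l, Real.sq_sqrt zero_le_two, Real.sq_sqrt hR,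
      mul_nonneg (abs_nonneg l) (mul_nonneg (Real.sqrt_nonneg 2) (Real.sqrt_nonneg R))]
  have hl : |l| ≤ |D - l| - D + 2 * M := by
    cases abs_cases l <;> cases abs_cases (D - l) <;> linarith
  linarith

section SymmetricOperator

variable {E ι : Type*} [NormedAddCommGroup E] [InnerProductSpace ℝ E] [Fintype ι]
  {T : E →ₗ[ℝ] E}

lemma LinearMap.IsSymmetric.trace_comp_self_eq_sum_norm_sq (hT : T.IsSymmetric)
    (b : OrthonormalBasis ι ℝ E) :
    trace ℝ E (T ∘ₗ T) = ∑ i, ‖T (b i)‖ ^ 2 := by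
  rw [LinearMap.trace_eq_sum_inner _ b]
  refine Finset.sum_congr rfl fun i _ => ?_
  rw [LinearMap.comp_apply, ← hT, real_inner_self_eq_norm_sq]

lemma LinearMap.IsSymmetric.trace_comp_self_nonneg [FiniteDimensional ℝ E] (hT : T.IsSymmetric) :
    0 ≤ trace ℝ E (T ∘ₗ T) := by
  rw [hT.trace_comp_self_eq_sum_norm_sq (stdOrthonormalBasis ℝ E)]
  positivity

lemma abs_sum_inner_le_sqrt_card_mul (s : Finset ι) (a : ι → E) (b : OrthonormalBasis ι ℝ E) :
    |∑ i ∈ s, ⟪a i, b i⟫| ≤ √(#s) * √(∑ i ∈ s, ‖a i‖ ^ 2) := by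
  calc |∑ i ∈ s, ⟪a i, b i⟫| ≤ ∑ i ∈ s, ‖a i‖ :=
        (abs_sum_le_sum_abs _ _).trans <| Finset.sum_le_sum fun i _ => by
          simpa using abs_real_inner_le_norm (a i) (b i)
    _ ≤ √(#s) * √(∑ i ∈ s, ‖a i‖ ^ 2) := by
        rw [← Real.sqrt_mul (by positivity)]
        exact Real.le_sqrt_of_sq_le sq_sum_le_card_mul_sum_sq

lemma LinearMap.IsSymmetric.norm_apply_sq_le (hT : T.IsSymmetric) [DecidableEq ι]
    (b : OrthonormalBasis ι ℝ E) (i₀ : ι) :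
    ‖T (b i₀)‖ ^ 2 ≤ ⟪T (b i₀), b i₀⟫ ^ 2 + ∑ i ∈ univ.erase i₀, ‖T (b i)‖ ^ 2 := by
  rw [← b.sum_sq_inner_right, ← Finset.add_sum_erase _ _ (mem_univ i₀), real_inner_comm]
  refine add_le_add le_rfl (Finset.sum_le_sum fun i _ => ?_)
  rw [sq_le_sq, ← hT, abs_norm]
  simpa using abs_real_inner_le_norm (T (b i)) (b i₀)

lemma exists_orthonormalBasis_apply_eq [FiniteDimensional ℝ E] {ν : E} (hν : ‖ν‖ = 1) :
    ∃ (s : Finset E) (b : OrthonormalBasis s ℝ E) (i₀ : s), b i₀ = ν := by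
  classical
  have hν' : Orthonormal ℝ ((↑) : ({ν} : Set E) → E) := by
    rw [orthonormal_subtype_iff_ite]
    simp [hν]
  obtain ⟨s, b, hνs, hb⟩ := hν'.exists_orthonormalBasis_extension
  exact ⟨s, b, ⟨ν, hνs rfl⟩, by rw [hb]⟩

theorem LinearMap.IsSymmetric.sqrt_trace_sq_le [FiniteDimensional ℝ E] (hT : T.IsSymmetric)
    {ν : E} (hν : ‖ν‖ = 1) {M : ℝ} (hM : 0 ≤ M) (hTM : trace ℝ E T ≤ M) :
    √(trace ℝ E (T ∘ₗ T)) ≤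
      (√2 + √(finrank ℝ E - 1 : ℝ)) * √(trace ℝ E (T ∘ₗ T) - ‖T ν‖ ^ 2)
        - trace ℝ E T + 2 * M := by
  classical
  obtain ⟨s, b, i₀, rfl⟩ := exists_orthonormalBasis_apply_eq hν
  have hR : trace ℝ E (T ∘ₗ T) - ‖T (b i₀)‖ ^ 2 = ∑ i ∈ univ.erase i₀, ‖T (b i)‖ ^ 2 := by
    rw [hT.trace_comp_self_eq_sum_norm_sq b, ← add_sum_erase _ _ (mem_univ i₀), add_sub_cancel_left]
  have hD : trace ℝ E T - ⟪T (b i₀), b i₀⟫ = ∑ i ∈ univ.erase i₀, ⟪T (b i), b i⟫ := by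
    simp_rw [LinearMap.trace_eq_sum_inner T b, ← add_sum_erase _ _ (mem_univ i₀),
      real_inner_comm (b _)]
    ring
  have hcard : (#(univ.erase i₀) : ℝ) = finrank ℝ E - 1 := by
    rw [card_erase_of_mem (mem_univ i₀), Module.finrank_eq_card_basis b.toBasis, card_univ,
      Nat.cast_sub (Fintype.card_pos_iff.mpr ⟨i₀⟩), Nat.cast_one]
  refine Real.sqrt_le_of_le_sq_add_two_mul (l := ⟪T (b i₀), b i₀⟫)
    (hR ▸ sum_nonneg fun _ _ => sq_nonneg _) ?_ ?_ hTM hM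
  · linarith [hT.norm_apply_sq_le b i₀]
  · rw [hD, hR, ← hcard]
    exact abs_sum_inner_le_sqrt_card_mul _ _ b

end SymmetricOperator

theorem fderiv_fderiv_apply_const {E F : Type*} [NormedAddCommGroup E] [NormedSpace ℝ E]
    [NormedAddCommGroup F] [NormedSpace ℝ F] {u : E → F} {x : E}
    (hu : DifferentiableAt ℝ (fderiv ℝ u) x) (v w : E) :
    fderiv ℝ (fun y => fderiv ℝ u y v) x w = fderiv ℝ (fderiv ℝ u) x w v :=
  congrArg (· w) ((ContinuousLinearMap.apply ℝ F v).hasFDerivAt.comp x hu.hasFDerivAt).fderiv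

section Hessian

variable {E : Type*} [NormedAddCommGroup E] [InnerProductSpace ℝ E] [CompleteSpace E]
  {u : E → ℝ} {x : E}

def hessianOperator (u : E → ℝ) (x : E) : E →L[ℝ] E :=
  continuousLinearMapOfBilin (fderiv ℝ (fderiv ℝ u) x)

@[simp]
lemma inner_hessianOperator_apply (v w : E) :
    ⟪hessianOperator u x v, w⟫ = fderiv ℝ (fderiv ℝ u) x v w :=
  continuousLinearMapOfBilin_apply _ v w

lemma isSymmetric_hessianOperator (hu : ContDiffAt ℝ 2 u x) :
    (hessianOperator u x : E →ₗ[ℝ] E).IsSymmetric := fun v w => by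
  rw [ContinuousLinearMap.coe_coe, inner_hessianOperator_apply, real_inner_comm,
    inner_hessianOperator_apply]
  exact hu.isSymmSndFDerivAt (by simp) v w

lemma fderiv_fderiv_apply_const_eq_inner_hessianOperator (hu : ContDiffAt ℝ 2 u x) (v w : E) :
    fderiv ℝ (fun y => fderiv ℝ u y v) x w = ⟪hessianOperator u x v, w⟫ := by
  rw [fderiv_fderiv_apply_const ((hu.fderiv_right (m := 1) le_rfl).differentiableAt one_ne_zero),
    inner_hessianOperator_apply]
  exact hu.isSymmSndFDerivAt (by simp) w v

end Hessian

section EuclideanHessian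

variable {n : ℕ} {u : En n → ℝ} {x : En n}

lemma hessNorm_eq_sqrt_trace (hu : ContDiffAt ℝ 2 u x) :
    hessNorm u x = √(trace ℝ (En n)
      ((hessianOperator u x : En n →ₗ[ℝ] En n) ∘ₗ hessianOperator u x)) := by
  rw [(isSymmetric_hessianOperator hu).trace_comp_self_eq_sum_norm_sq
    (EuclideanSpace.basisFun (Fin n) ℝ), hessNorm]
  refine congrArg _ (sum_congr rfl fun i _ => ?_)
  rw [← (EuclideanSpace.basisFun (Fin n) ℝ).sum_sq_inner_right]
  refine sum_congr rfl fun j _ => ?_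
  rw [fderiv_fderiv_apply_const_eq_inner_hessianOperator hu, EuclideanSpace.basisFun_apply,
    EuclideanSpace.basisFun_apply]
  exact congrArg (· ^ 2) (isSymmetric_hessianOperator hu _ _)

lemma lapl_eq_trace (hu : ContDiffAt ℝ 2 u x) :
    lapl u x = trace ℝ (En n) (hessianOperator u x : En n →ₗ[ℝ] En n) := by
  rw [LinearMap.trace_eq_sum_inner _ (EuclideanSpace.basisFun (Fin n) ℝ), lapl]
  refine sum_congr rfl fun i _ => ?_
  rw [fderiv_fderiv_apply_const_eq_inner_hessianOperator hu, real_inner_comm]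
  simp

lemma hessApply_eq (hu : ContDiffAt ℝ 2 u x) (v : En n) :
    hessApply u x v = hessianOperator u x v := by
  ext i
  change fderiv ℝ (fun y => fderiv ℝ u y v) x (EuclideanSpace.single i 1) = _
  rw [fderiv_fderiv_apply_const_eq_inner_hessianOperator hu, EuclideanSpace.inner_single_right]
  simp

end EuclideanHessian

theorem statement11_general (n : ℕ) :
    ∃ C : ℝ, 0 < C ∧
    ∀ A K : ℝ, 0 ≤ A → 0 ≤ K →
    ∀ f : ℝ → ℝ, (∀ t : ℝ, A * min 0 t - K ≤ f t) →
    ∀ r : ℝ, 0 < r →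
    ∀ u : En n → ℝ, ContDiffOn ℝ 2 u (ball (0 : En n) r) →
      (∀ x ∈ ball (0 : En n) r, -lapl u x = f (u x)) →
    ∀ x ∈ ball (0 : En n) r, gradient u x ≠ 0 →
      hessNorm u x ≤
        C * Real.sqrt (hessNorm u x ^ 2 -
              ‖‖gradient u x‖⁻¹ • hessApply u x (gradient u x)‖ ^ 2)
          - lapl u x + 2 * (A * |u x| + K) := by
  refine ⟨√2 + √((n : ℝ) - 1), by positivity, ?_⟩
  intro A K hA hK f hf r _ u hu hlap x hx hDu
  have hux : ContDiffAt ℝ 2 u x := hu.contDiffAt (isOpen_ball.mem_nhds hx)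
  have hlapl : lapl u x ≤ A * |u x| + K := by
    have hmin : -|u x| ≤ min 0 (u x) := le_min (neg_nonpos.mpr (abs_nonneg _)) (neg_abs_le _)
    linarith [hf (u x), hlap x hx, mul_le_mul_of_nonneg_left hmin hA]
  have hH := isSymmetric_hessianOperator hux
  have key := hH.sqrt_trace_sq_le (norm_smul_inv_norm (𝕜 := ℝ) hDu) (by positivity)
    (lapl_eq_trace hux ▸ hlapl)
  rw [hessNorm_eq_sqrt_trace hux, Real.sq_sqrt hH.trace_comp_self_nonneg, lapl_eq_trace hux,
    hessApply_eq hux, ← ContinuousLinearMap.map_smul]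
  simpa [finrank_euclideanSpace] using key

/-- The pointwise Hessian inequality at points where `Du ≠ 0`. -/
theorem statement11 (n : ℕ) (hn : 2 ≤ n) :
    ∃ C : ℝ, 0 < C ∧
    ∀ A K : ℝ, 0 ≤ A → 0 ≤ K →
    ∀ f : ℝ → ℝ, (∀ t : ℝ, A * min 0 t - K ≤ f t) →
    ∀ r : ℝ, 0 < r →
    ∀ u : En n → ℝ, ContDiffOn ℝ 2 u (ball (0 : En n) r) →
      (∀ x ∈ ball (0 : En n) r, -lapl u x = f (u x)) →
    ∀ x ∈ ball (0 : En n) r, gradient u x ≠ 0 →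
      hessNorm u x ≤
        C * Real.sqrt (hessNorm u x ^ 2 -
              ‖‖gradient u x‖⁻¹ • hessApply u x (gradient u x)‖ ^ 2)
          - lapl u x + 2 * (A * |u x| + K) :=
  statement11_general n
end
end
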